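/- Localization of the smallest zero of f (from the proof of Theorem 2): let n ≥ 2, let x_1 < x_2 < ⋯ < x_n be reals, let p_1,…,p_n > 0, and set P = ∑_{i=1}^n p_i. Then there exists a real λ with x_1 − P < λ < min(x_1, x_n − P) and f(λ) = 0; moreover f has no zero in the interval (−∞, x_1 − P]. -/
import Mathlib


open Finset

noncomputable section

/-- The polynomial f(x) = ∏ᵢ (xᵢ − x) − ∑ᵢ pᵢ ∏_{j ≠ i} (xⱼ − x). -/
def fpoly {n : ℕ} (x p : Fin n → ℝ) (t : ℝ) : ℝ :=
  ∏ i, (x i - t) - ∑ i, p i * ∏ j ∈ Finset.univ.erase i, (x j - t)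

/-- Localization of the smallest zero of f (from the proof of Theorem 2): for
x₁ < x₂ < ⋯ < xₙ, p₁,…,pₙ > 0 and P = ∑ᵢ pᵢ, f has a zero in
(x₁ − P, min(x₁, xₙ − P)) and no zero in (−∞, x₁ − P]. -/
theorem fpoly_smallest_zero (n : ℕ) (hn : 2 ≤ n) (x p : Fin n → ℝ)
    (hx : StrictMono x) (hp : ∀ i, 0 < p i) :
    (∃ lam : ℝ,
        x ⟨0, by omega⟩ - (∑ i, p i) < lam ∧
        lam < min (x ⟨0, by omega⟩) (x ⟨n - 1, by omega⟩ - ∑ i, p i) ∧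
        fpoly x p lam = 0) ∧
      ∀ lam : ℝ, lam ≤ x ⟨0, by omega⟩ - (∑ i, p i) → fpoly x p lam ≠ 0 := by
  have hn0 : 0 < n := by omega
  have hnN : n - 1 < n := by omega
  set i0 : Fin n := ⟨0, hn0⟩ with hi0
  set iN : Fin n := ⟨n - 1, hnN⟩ with hiN
  set P : ℝ := ∑ i, p i with hPdef
  have hP : 0 < P := Finset.sum_pos (fun i _ => hp i) ⟨i0, mem_univ _⟩
  have hx0 : ∀ i, x i0 ≤ x i := by
    intro i
    exact hx.monotone (by simp [Fin.le_def, hi0])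
  have hxN : ∀ i, x i ≤ x iN := by
    intro i
    exact hx.monotone (by simp only [Fin.le_def, hiN]; omega)
  have h0N : x i0 < x iN := hx (by simp only [Fin.lt_def, hi0, hiN]; omega)
  have hsplit : ∀ (i : Fin n) (t : ℝ),
      ∏ j, (x j - t) = (x i - t) * ∏ j ∈ Finset.univ.erase i, (x j - t) :=
    fun i t => (Finset.mul_prod_erase univ _ (mem_univ i)).symm
  have hsumdiv : ∀ t : ℝ, ∑ i, (p i / P) * ∏ j, (x j - t) = ∏ j, (x j - t) := by
    intro t
    rw [← Finset.sum_mul, ← Finset.sum_div, ← hPdef, div_self hP.ne', one_mul]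
  -- positivity on (-∞, x₁ - P]
  have hA : ∀ t : ℝ, t ≤ x i0 - P → 0 < fpoly x p t := by
    intro t ht
    have hfac : ∀ i, 0 < x i - t := fun i => by have := hx0 i; linarith
    have hQ : ∀ i : Fin n, 0 < ∏ j ∈ Finset.univ.erase i, (x j - t) :=
      fun i => Finset.prod_pos fun j _ => hfac j
    have hterm : ∀ i ∈ univ,
        p i * ∏ j ∈ Finset.univ.erase i, (x j - t) ≤ (p i / P) * ∏ j, (x j - t) := by
      intro i _
      rw [hsplit i t, div_mul_eq_mul_div, le_div_iff₀ hP]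
      have h1 : P ≤ x i - t := by have := hx0 i; linarith
      nlinarith [mul_pos (hp i) (hQ i), hQ i, hp i]
    have hstrict : p iN * ∏ j ∈ Finset.univ.erase iN, (x j - t)
        < (p iN / P) * ∏ j, (x j - t) := by
      rw [hsplit iN t, div_mul_eq_mul_div, lt_div_iff₀ hP]
      have h1 : P < x iN - t := by linarith
      nlinarith [mul_pos (hp iN) (hQ iN)]
    have hsum := Finset.sum_lt_sum hterm ⟨iN, mem_univ _, hstrict⟩
    rw [hsumdiv t] at hsum
    unfold fpoly
    linarith
  -- negativity at min (x i0) (x iN - P)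
  have hB : fpoly x p (min (x i0) (x iN - P)) < 0 := by
    rcases le_or_gt (x i0) (x iN - P) with hc | hc
    · rw [min_eq_left hc]
      unfold fpoly
      have hprod0 : ∏ i, (x i - x i0) = 0 :=
        Finset.prod_eq_zero (mem_univ i0) (by simp)
      have hsum0 : ∑ i, p i * ∏ j ∈ Finset.univ.erase i, (x j - x i0)
          = p i0 * ∏ j ∈ Finset.univ.erase i0, (x j - x i0) := by
        refine Finset.sum_eq_single i0 (fun i _ hi => ?_) (fun h => absurd (mem_univ _) h)
        have : i0 ∈ Finset.univ.erase i := Finset.mem_erase.mpr ⟨Ne.symm hi, mem_univ _⟩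
        rw [Finset.prod_eq_zero this (by simp), mul_zero]
      rw [hprod0, hsum0]
      have hpos : 0 < ∏ j ∈ Finset.univ.erase i0, (x j - x i0) := by
        refine Finset.prod_pos fun j hj => ?_
        have hji : j ≠ i0 := (Finset.mem_erase.mp hj).1
        have : i0 < j := by
          rw [Fin.lt_def]
          have : j.val ≠ 0 := fun h => hji (Fin.ext (by simp [hi0, h]))
          simp only [hi0]; omega
        have := hx this; linarith
      nlinarith [hp i0]
    · rw [min_eq_right hc.le]
      set t : ℝ := x iN - P with htdef
      have ht0 : t < x i0 := hc
      have hfac : ∀ i, 0 < x i - t := fun i => by have := hx0 i; linarith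
      have hQ : ∀ i : Fin n, 0 < ∏ j ∈ Finset.univ.erase i, (x j - t) :=
        fun i => Finset.prod_pos fun j _ => hfac j
      have hterm : ∀ i ∈ univ,
          (p i / P) * ∏ j, (x j - t) ≤ p i * ∏ j ∈ Finset.univ.erase i, (x j - t) := by
        intro i _
        rw [hsplit i t, div_mul_eq_mul_div, div_le_iff₀ hP]
        have h1 : x i - t ≤ P := by have := hxN i; simp only [htdef]; linarith
        nlinarith [mul_pos (hp i) (hQ i)]
      have hstrict : (p i0 / P) * ∏ j, (x j - t)
          < p i0 * ∏ j ∈ Finset.univ.erase i0, (x j - t) := by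
        rw [hsplit i0 t, div_mul_eq_mul_div, div_lt_iff₀ hP]
        have h1 : x i0 - t < P := by simp only [htdef]; linarith
        nlinarith [mul_pos (hp i0) (hQ i0)]
      have hsum := Finset.sum_lt_sum hterm ⟨i0, mem_univ _, hstrict⟩
      rw [hsumdiv t] at hsum
      unfold fpoly
      linarith
  have hcont : Continuous (fpoly x p) := by
    unfold fpoly
    apply Continuous.sub
    · exact continuous_finset_prod _ fun i _ => continuous_const.sub continuous_id
    · exact continuous_finset_sum _ fun i _ =>
        continuous_const.mul
          (continuous_finset_prod _ fun j _ => continuous_const.sub continuous_id)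
  set a : ℝ := x i0 - P with hadef
  set b : ℝ := min (x i0) (x iN - P) with hbdef
  have hab : a < b := lt_min (by linarith) (by linarith)
  have hivt := intermediate_value_Ioo' hab.le hcont.continuousOn
  have h0mem : (0 : ℝ) ∈ Set.Ioo (fpoly x p b) (fpoly x p a) :=
    ⟨hB, hA a le_rfl⟩
  obtain ⟨lam, hlam, hflam⟩ := hivt h0mem
  refine ⟨⟨lam, hlam.1, hlam.2, hflam⟩, fun lam hlam => (hA lam hlam).ne'⟩
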